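/- Accuracy condition for approximate inertia via factorization: if à is symmetric, μ ∈ ℝ is not an eigenvalue of Ã, and M is a symmetric matrix with ‖(à − μI) − M‖₂ < min_j |λ_j(Ã) − μ|, then the number of negative eigenvalues of M equals the number of eigenvalues of à less than μ. -/
import Mathlib
open Finset Matrix
open scoped InnerProductSpace

section Aux
variable {ι F : Type*} [Fintype ι] [NormedAddCommGroup F] [InnerProductSpace ℝ F]

lemma qf_eq (b : OrthonormalBasis ι ℝ F) (T : F →L[ℝ] F) (ν : ι → ℝ)
    (hT : ∀ i, T (b i) = ν i • b i) (x : F) :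
    ⟪x, T x⟫_ℝ = ∑ i, ν i * (⟪b i, x⟫_ℝ)^2 := by
  have hTx : T x = ∑ i, (⟪b i, x⟫_ℝ * ν i) • b i := by
    conv_lhs => rw [← b.sum_repr' x]
    rw [map_sum]
    refine Finset.sum_congr rfl fun i _ => ?_
    rw [T.map_smul, hT i, smul_smul]
  rw [hTx, inner_sum]
  refine Finset.sum_congr rfl fun i _ => ?_
  rw [real_inner_smul_right, real_inner_comm]
  ring

lemma parseval (b : OrthonormalBasis ι ℝ F) (x : F) :
    ‖x‖^2 = ∑ i, (⟪b i, x⟫_ℝ)^2 := by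
  have := qf_eq b (ContinuousLinearMap.id ℝ F) (fun _ => 1) (fun i => by simp) x
  simpa [real_inner_self_eq_norm_sq] using this

lemma span_inner_zero (b : OrthonormalBasis ι ℝ F) (S : Finset ι) (x : F)
    (hx : x ∈ Submodule.span ℝ (⇑b '' ↑S)) {j : ι} (hj : j ∉ S) :
    ⟪b j, x⟫_ℝ = 0 := by
  induction hx using Submodule.span_induction with
  | mem y hy =>
    obtain ⟨i, hi, rfl⟩ := hy
    exact b.orthonormal.2 (fun h => hj (h ▸ hi))
  | zero => simp
  | add y z _ _ hy hz => rw [inner_add_right, hy, hz]; ring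
  | smul c y _ hy => rw [real_inner_smul_right, hy]; ring

lemma span_finrank (b : OrthonormalBasis ι ℝ F) (S : Finset ι) :
    Module.finrank ℝ (Submodule.span ℝ (⇑b '' ↑S)) = S.card := by
  have himg : ⇑b '' ↑S = Set.range (⇑b ∘ (Subtype.val : S → ι)) := by
    ext y; simp
  rw [himg, finrank_span_eq_card
    ((b.orthonormal.comp _ Subtype.coe_injective).linearIndependent)]
  simp

lemma qf_le (b : OrthonormalBasis ι ℝ F) (T : F →L[ℝ] F) (ν : ι → ℝ)
    (hT : ∀ i, T (b i) = ν i • b i) (S : Finset ι) (c : ℝ)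
    (hc : ∀ i ∈ S, ν i ≤ c) (x : F)
    (hx : x ∈ Submodule.span ℝ (⇑b '' ↑S)) :
    ⟪x, T x⟫_ℝ ≤ c * ‖x‖^2 := by
  rw [qf_eq b T ν hT x, parseval b x, Finset.mul_sum]
  refine Finset.sum_le_sum fun i _ => ?_
  by_cases hi : i ∈ S
  · exact mul_le_mul_of_nonneg_right (hc i hi) (sq_nonneg _)
  · rw [span_inner_zero b S x hx hi]; simp

lemma qf_ge (b : OrthonormalBasis ι ℝ F) (T : F →L[ℝ] F) (ν : ι → ℝ)
    (hT : ∀ i, T (b i) = ν i • b i) (S : Finset ι) (c : ℝ)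
    (hc : ∀ i ∈ S, c ≤ ν i) (x : F)
    (hx : x ∈ Submodule.span ℝ (⇑b '' ↑S)) :
    c * ‖x‖^2 ≤ ⟪x, T x⟫_ℝ := by
  rw [qf_eq b T ν hT x, parseval b x, Finset.mul_sum]
  refine Finset.sum_le_sum fun i _ => ?_
  by_cases hi : i ∈ S
  · exact mul_le_mul_of_nonneg_right (hc i hi) (sq_nonneg _)
  · rw [span_inner_zero b S x hx hi]; simp

end Aux

lemma aux_eig {n : ℕ} (B : Matrix (Fin n) (Fin n) ℝ) (hB : B.IsHermitian) (i : Fin n) :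
    Matrix.toEuclideanCLM (𝕜 := ℝ) B (hB.eigenvectorBasis i)
      = hB.eigenvalues i • hB.eigenvectorBasis i := by
  apply (WithLp.equiv 2 _).injective
  simp only [Matrix.ofLp_toEuclideanCLM, Matrix.toLin'_apply]
  ext j
  have := congrFun (hB.mulVec_eigenvectorBasis i) j
  simpa using this

/-- two spans on which a quadratic form is negative resp. nonnegative have complementary size -/
lemma dim_ineq {n : ℕ} (V W : Submodule ℝ (EuclideanSpace ℝ (Fin n)))
    (T : EuclideanSpace ℝ (Fin n) →L[ℝ] EuclideanSpace ℝ (Fin n))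
    (hV : ∀ x ∈ V, x ≠ 0 → ⟪x, T x⟫_ℝ < 0)
    (hW : ∀ x ∈ W, 0 ≤ ⟪x, T x⟫_ℝ) :
    Module.finrank ℝ V + Module.finrank ℝ W ≤ n := by
  have hdisj : V ⊓ W = ⊥ := by
    rw [Submodule.eq_bot_iff]
    intro x hx
    by_contra hx0
    exact absurd (hW x hx.2) (not_le.mpr (hV x hx.1 hx0))
  have := Submodule.finrank_sup_add_finrank_inf_eq V W
  rw [hdisj, finrank_bot, add_zero] at this
  rw [← this]
  calc Module.finrank ℝ ↥(V ⊔ W) ≤ Module.finrank ℝ (EuclideanSpace ℝ (Fin n)) :=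
        Submodule.finrank_le _
    _ = n := by simp

theorem approximate_factorization_inertia
    {n : ℕ} (hn : 0 < n) (A M : Matrix (Fin n) (Fin n) ℝ) (μ : ℝ)
    (hA : A.IsHermitian) (hM : M.IsHermitian)
    (hμ : ∀ j : Fin n, hA.eigenvalues j ≠ μ)
    (hclose : ‖Matrix.toEuclideanCLM (𝕜 := ℝ)
        ((A - μ • (1 : Matrix (Fin n) (Fin n) ℝ)) - M)‖
      < (univ.inf' (univ_nonempty_iff.mpr (Fin.pos_iff_nonempty.mp hn))
          (fun j => |hA.eigenvalues j - μ|))) :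
    (univ.filter (fun i => hM.eigenvalues i < 0)).card
      = (univ.filter (fun i => hA.eigenvalues i < μ)).card := by
  classical
  set g : ℝ := (univ.inf' (univ_nonempty_iff.mpr (Fin.pos_iff_nonempty.mp hn))
      (fun j => |hA.eigenvalues j - μ|)) with hg
  set Err : Matrix (Fin n) (Fin n) ℝ := (A - μ • (1 : Matrix (Fin n) (Fin n) ℝ)) - M with hErr
  set ε : ℝ := ‖Matrix.toEuclideanCLM (𝕜 := ℝ) Err‖ with hε
  have hεg : ε < g := hclose
  have hgle : ∀ j, g ≤ |hA.eigenvalues j - μ| := fun j => Finset.inf'_le _ (mem_univ j)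
  set bA := hA.eigenvectorBasis with hbA
  set bM := hM.eigenvectorBasis with hbM
  set TM := Matrix.toEuclideanCLM (𝕜 := ℝ) M with hTM
  set TA := Matrix.toEuclideanCLM (𝕜 := ℝ) (A - μ • (1 : Matrix (Fin n) (Fin n) ℝ)) with hTA
  set TE := Matrix.toEuclideanCLM (𝕜 := ℝ) Err with hTE
  have hsplit : ∀ x : EuclideanSpace ℝ (Fin n), ⟪x, TM x⟫_ℝ = ⟪x, TA x⟫_ℝ - ⟪x, TE x⟫_ℝ := by
    intro x
    have : TE = TA - TM := by rw [hTE, hErr, map_sub]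
    rw [this]
    simp [inner_sub_right]
  have hEbound : ∀ x : EuclideanSpace ℝ (Fin n), |⟪x, TE x⟫_ℝ| ≤ ε * ‖x‖^2 := by
    intro x
    calc |⟪x, TE x⟫_ℝ| ≤ ‖x‖ * ‖TE x‖ := abs_real_inner_le_norm _ _
      _ ≤ ‖x‖ * (ε * ‖x‖) := by
          gcongr
          exact TE.le_opNorm x
      _ = ε * ‖x‖^2 := by ring
  have hTAi : ∀ i, TA (bA i) = (hA.eigenvalues i - μ) • bA i := by
    intro i
    rw [hTA, map_sub, _root_.map_smul]
    simp only [_root_.map_one, ContinuousLinearMap.sub_apply, ContinuousLinearMap.smul_apply,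
      ContinuousLinearMap.one_apply, sub_smul]
    rw [hbA, aux_eig A hA i]
  have hTMi : ∀ i, TM (bM i) = hM.eigenvalues i • bM i := fun i => aux_eig M hM i
  -- p ≤ q
  set p := (univ.filter (fun i => hA.eigenvalues i < μ)).card with hp
  set q := (univ.filter (fun i => hM.eigenvalues i < 0)).card with hq
  have key1 : p + (n - q) ≤ n := by
    have hqn : q + (univ.filter (fun i => ¬ hM.eigenvalues i < 0)).card = n := by
      rw [hq, Finset.card_filter_add_card_filter_not]; simp
    have := dim_ineq
      (Submodule.span ℝ (⇑bA '' ↑(univ.filter (fun i => hA.eigenvalues i < μ))))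
      (Submodule.span ℝ (⇑bM '' ↑(univ.filter (fun i => ¬ hM.eigenvalues i < 0)))) TM
      (fun x hx hx0 => by
        have h1 : ⟪x, TA x⟫_ℝ ≤ -g * ‖x‖^2 := by
          refine qf_le bA TA _ hTAi _ (-g) (fun i hi => ?_) x hx
          have hi' := (Finset.mem_filter.mp hi).2
          have := hgle i
          rw [abs_of_neg (by linarith)] at this
          linarith
        have h2 := hEbound x
        have h3 := hsplit x
        have hxp : 0 < ‖x‖^2 := by
          have := norm_pos_iff.mpr hx0
          positivity
        have : ⟪x, TE x⟫_ℝ ≥ -(ε * ‖x‖^2) := neg_le_of_abs_le h2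
        nlinarith)
      (fun x hx => by
        have := qf_ge bM TM _ hTMi _ 0 (fun i hi => not_lt.mp (Finset.mem_filter.mp hi).2) x hx
        linarith [this])
    rw [span_finrank, span_finrank] at this
    omega
  have key2 : (n - p) + q ≤ n := by
    have hpn : p + (univ.filter (fun i => ¬ hA.eigenvalues i < μ)).card = n := by
      rw [hp, Finset.card_filter_add_card_filter_not]; simp
    have := dim_ineq
      (Submodule.span ℝ (⇑bA '' ↑(univ.filter (fun i => ¬ hA.eigenvalues i < μ))))
      (Submodule.span ℝ (⇑bM '' ↑(univ.filter (fun i => hM.eigenvalues i < 0)))) (-TM)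
      (fun x hx hx0 => by
        have h1 : g * ‖x‖^2 ≤ ⟪x, TA x⟫_ℝ := by
          refine qf_ge bA TA _ hTAi _ g (fun i hi => ?_) x hx
          have hi' := not_lt.mp (Finset.mem_filter.mp hi).2
          have h2 := hgle i
          have h3 : hA.eigenvalues i - μ > 0 := lt_of_le_of_ne (by linarith) (sub_ne_zero.mpr (hμ i)).symm
          rw [abs_of_pos h3] at h2
          linarith
        have h2 := hEbound x
        have h3 := hsplit x
        have hxp : 0 < ‖x‖^2 := by
          have := norm_pos_iff.mpr hx0
          positivity
        have h4 : ⟪x, TE x⟫_ℝ ≤ ε * ‖x‖^2 := le_of_abs_le h2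
        simp only [ContinuousLinearMap.neg_apply, inner_neg_right]
        nlinarith)
      (fun x hx => by
        have h1 : ⟪x, TM x⟫_ℝ ≤ 0 * ‖x‖^2 :=
          qf_le bM TM _ hTMi _ 0 (fun i hi => le_of_lt (Finset.mem_filter.mp hi).2) x hx
        simp only [ContinuousLinearMap.neg_apply, inner_neg_right]
        nlinarith)
    rw [span_finrank, span_finrank] at this
    omega
  omega
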